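/- arXiv:2002.02551 — 6 statements merged into one kernel-verified Lean document; each statement's English description precedes it below -/
import Mathlib

section
/- Let V be an n-dimensional real inner product space with n ≥ 2, W a real inner product space, α : V × V → W a symmetric bilinear map, ρ-data given by a symmetric bilinear form h : V × V → ℝ, and δ ∈ W. Suppose that for all X,Y,Z,W' ∈ V the expression ⟨X,Z⟩(⟨α(Y,W'),δ⟩ - h(Y,W')) + ⟨Y,W'⟩(⟨α(X,Z),δ⟩ - h(X,Z)) - ⟨X,W'⟩(⟨α(Y,Z),δ⟩ - h(Y,Z)) - ⟨Y,Z⟩(⟨α(X,W'),δ⟩ - h(X,W')) vanishes and dim V ≥ 3. Then ⟨α(X,Y),δ⟩ = h(X,Y) for all X,Y ∈ V. -/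
/-!
Write `P X Y = ⟪α X Y, δ⟫ - h X Y`; the hypothesis says that the Kulkarni–Nomizu product of `P`
with the inner product vanishes, and this product is injective in dimension at least 3.
Evaluating it at `(a, Z, Z, b)` with `Z` a unit vector orthogonal to `a` and `b` gives
`P a b = -⟪a, b⟫ P Z Z`, and evaluating it at `(Z, U, Z, U)` with `Z, U` orthonormal gives
`P Z Z + P U U = 0`. For three orthonormal vectors these relations force `P Z Z = 0`, hence `P = 0`.
-/

open scoped InnerProductSpace

section

variable {V : Type*} [NormedAddCommGroup V] [InnerProductSpace ℝ V]

lemma exists_norm_eq_one_inner_eq_zero_of_three_le_finrank [FiniteDimensional ℝ V]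
    (hdim : 3 ≤ Module.finrank ℝ V) (X Y : V) :
    ∃ Z : V, ‖Z‖ = 1 ∧ ⟪X, Z⟫_ℝ = 0 ∧ ⟪Y, Z⟫_ℝ = 0 := by
  classical
  set K : Submodule ℝ V := Submodule.span ℝ (↑({X, Y} : Finset V))
  have hK : Module.finrank ℝ K ≤ 2 :=
    (finrank_span_finset_le_card _).trans ((Finset.card_insert_le X {Y}).trans (by simp))
  have hKperp : Kᗮ ≠ ⊥ := by
    rw [Ne, Submodule.orthogonal_eq_bot_iff]
    intro hKtop
    rw [hKtop, finrank_top] at hK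
    omega
  obtain ⟨z, hz, hz0⟩ := Submodule.exists_mem_ne_zero_of_ne_bot hKperp
  have horth (u : V) (hu : u ∈ ({X, Y} : Finset V)) : ⟪u, z⟫_ℝ = 0 :=
    (Submodule.mem_orthogonal K z).mp hz u (Submodule.subset_span hu)
  refine ⟨‖z‖⁻¹ • z, norm_smul_inv_norm hz0, ?_, ?_⟩ <;>
    simp [real_inner_smul_right, horth]

def kulkarniNomizuInner (P : V → V → ℝ) (X Y Z W : V) : ℝ :=
  ⟪X, Z⟫_ℝ * P Y W + ⟪Y, W⟫_ℝ * P X Z - ⟪X, W⟫_ℝ * P Y Z - ⟪Y, Z⟫_ℝ * P X W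

variable {P : V → V → ℝ}

lemma apply_eq_neg_inner_mul_apply_self (hP : ∀ X Y Z W, kulkarniNomizuInner P X Y Z W = 0)
    {a b Z : V} (hZ : ‖Z‖ = 1)
    (ha : ⟪a, Z⟫_ℝ = 0) (hb : ⟪b, Z⟫_ℝ = 0) :
    P a b = -⟪a, b⟫_ℝ * P Z Z := by
  have h := hP a Z Z b
  rw [kulkarniNomizuInner, real_inner_self_eq_norm_sq, hZ, ha, real_inner_comm, hb] at h
  linarith

lemma apply_self_add_apply_self_eq_zero (hP : ∀ X Y Z W, kulkarniNomizuInner P X Y Z W = 0)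
    {Z U : V} (hZ : ‖Z‖ = 1) (hU : ‖U‖ = 1)
    (hZU : ⟪Z, U⟫_ℝ = 0) :
    P Z Z + P U U = 0 := by
  have h := hP Z U Z U
  rw [kulkarniNomizuInner, real_inner_self_eq_norm_sq, real_inner_self_eq_norm_sq, hZ, hU,
    hZU, real_inner_comm, hZU] at h
  linarith

lemma eq_zero_of_kulkarniNomizuInner_eq_zero [FiniteDimensional ℝ V]
    (hP : ∀ X Y Z W, kulkarniNomizuInner P X Y Z W = 0) (hdim : 3 ≤ Module.finrank ℝ V) (X Y : V) : P X Y = 0 := by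
  obtain ⟨Z, hZ, hXZ, hYZ⟩ := exists_norm_eq_one_inner_eq_zero_of_three_le_finrank hdim X Y
  obtain ⟨U, hU, hZU, -⟩ := exists_norm_eq_one_inner_eq_zero_of_three_le_finrank hdim Z Z
  obtain ⟨E, hE, hZE, hUE⟩ := exists_norm_eq_one_inner_eq_zero_of_three_le_finrank hdim Z U
  have hZZ : P Z Z = 0 := by
    linarith [apply_self_add_apply_self_eq_zero hP hZ hU hZU,
      apply_self_add_apply_self_eq_zero hP hZ hE hZE,
      apply_self_add_apply_self_eq_zero hP hU hE hUE]
  rw [apply_eq_neg_inner_mul_apply_self hP hZ hXZ hYZ, hZZ, mul_zero]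

end

theorem stmt_2_general {V W : Type*} [NormedAddCommGroup V] [InnerProductSpace ℝ V]
    [NormedAddCommGroup W] [InnerProductSpace ℝ W] [FiniteDimensional ℝ V]
    (hdim : 3 ≤ Module.finrank ℝ V)
    (α : V →ₗ[ℝ] V →ₗ[ℝ] W)
    (h : V →ₗ[ℝ] V →ₗ[ℝ] ℝ) (δ : W)
    (hyp : ∀ X Y Z W' : V,
      ⟪X, Z⟫_ℝ * (⟪α Y W', δ⟫_ℝ - h Y W') + ⟪Y, W'⟫_ℝ * (⟪α X Z, δ⟫_ℝ - h X Z)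
      - ⟪X, W'⟫_ℝ * (⟪α Y Z, δ⟫_ℝ - h Y Z) - ⟪Y, Z⟫_ℝ * (⟪α X W', δ⟫_ℝ - h X W') = 0) :
    ∀ X Y : V, ⟪α X Y, δ⟫_ℝ = h X Y := fun X Y =>
  sub_eq_zero.mp
    (eq_zero_of_kulkarniNomizuInner_eq_zero (P := fun a b => ⟪α a b, δ⟫_ℝ - h a b) hyp hdim X Y)

/-- If the Gauss-type quadratic expression built from a symmetric bilinear map `α`,
a symmetric bilinear form `h` and a fixed vector `δ` vanishes identically on an
inner product space of dimension at least 3, then `⟪α X Y, δ⟫ = h X Y`. -/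
theorem stmt_2 {V W : Type*} [NormedAddCommGroup V] [InnerProductSpace ℝ V]
    [NormedAddCommGroup W] [InnerProductSpace ℝ W] [FiniteDimensional ℝ V]
    (hdim : 3 ≤ Module.finrank ℝ V)
    (α : V →ₗ[ℝ] V →ₗ[ℝ] W) (hα : ∀ X Y : V, α X Y = α Y X)
    (h : V →ₗ[ℝ] V →ₗ[ℝ] ℝ) (hh : ∀ X Y : V, h X Y = h Y X) (δ : W)
    (hyp : ∀ X Y Z W' : V,
      ⟪X, Z⟫_ℝ * (⟪α Y W', δ⟫_ℝ - h Y W') + ⟪Y, W'⟫_ℝ * (⟪α X Z, δ⟫_ℝ - h X Z)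
      - ⟪X, W'⟫_ℝ * (⟪α Y Z, δ⟫_ℝ - h Y Z) - ⟪Y, Z⟫_ℝ * (⟪α X W', δ⟫_ℝ - h X W') = 0) :
    ∀ X Y : V, ⟪α X Y, δ⟫_ℝ = h X Y :=
  stmt_2_general hdim α h δ hyp
end

section
/- Let S be a subspace of ℝᵐ and T₀ : S → ℝᵐ a linear map that is an isometry onto its image T₀(S). Assume there is no nonzero v ∈ S with T₀v = -v. Then there exists a linear isometry T of ℝᵐ extending T₀ whose only possible real eigenvalue is 1. -/
open scoped InnerProductSpace

/-!
Encode `T₀` by a skew map `A` with `A (v + T₀ v) = v - T₀ v`. Since `T₀` preserves inner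
products, `v + T₀ v ↦ v - T₀ v` is skew on the range of `1 + T₀`, and it is well defined because
`-1` is not an eigenvalue of `T₀`; a skew map on a subspace extends to the whole space. The Cayley
transform `T = (1 - A)(1 + A)⁻¹` is an isometry, and `A (x + T x) = x - T x` characterises `T`,
so `T` extends `T₀`. A real eigenvalue of an isometry is `±1`, and `T x = -x` gives `2 x = A 0 = 0`.
-/

variable {E : Type*} [NormedAddCommGroup E] [InnerProductSpace ℝ E]

theorem LinearIsometry.eq_one_or_eq_neg_one_of_apply_eq_smul (f : E →ₗᵢ[ℝ] E) {lam : ℝ} {v : E}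
    (hv : v ≠ 0) (h : f v = lam • v) : lam = 1 ∨ lam = -1 := by
  have : |lam| * ‖v‖ = 1 * ‖v‖ := by
    rw [one_mul, ← Real.norm_eq_abs, ← norm_smul, ← h, f.norm_map]
  exact abs_eq zero_le_one |>.mp (mul_right_cancel₀ (norm_ne_zero_iff.mpr hv) this)

section Skew

variable {A : E →ₗ[ℝ] E} (hA : ∀ x, ⟪A x, x⟫_ℝ = 0)
include hA

theorem injective_one_add_of_inner_apply_self_eq_zero :
    Function.Injective (1 + A : E →ₗ[ℝ] E) := by
  rw [← LinearMap.ker_eq_bot, LinearMap.ker_eq_bot']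
  intro x hx
  have : ⟪x + A x, x⟫_ℝ = ‖x‖ ^ 2 := by
    rw [inner_add_left, hA, add_zero, real_inner_self_eq_norm_sq]
  rw [← norm_eq_zero, ← sq_eq_zero_iff, ← this]
  simp only [LinearMap.add_apply, Module.End.one_apply] at hx
  rw [hx, inner_zero_left]

theorem norm_sub_apply_eq_norm_add_apply (x : E) : ‖x - A x‖ = ‖x + A x‖ :=
  norm_sub_eq_norm_add (hA x)

end Skew

variable [FiniteDimensional ℝ E]

theorem exists_skew_extension {W : Submodule ℝ E} (B : W →ₗ[ℝ] E)
    (hB : ∀ w w' : W, ⟪B w, w'⟫_ℝ = -⟪(w : E), B w'⟫_ℝ) :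
    ∃ A : E →ₗ[ℝ] E, (∀ x, ⟪A x, x⟫_ℝ = 0) ∧ ∀ w : W, A w = B w := by
  let P : E →ₗ[ℝ] W := W.orthogonalProjectionOnto
  let C : E →ₗ[ℝ] E := B ∘ₗ P
  -- On `W`, `C.adjoint = -W.starProjection ∘ B` by `hB`; the last term cancels it there.
  refine ⟨C - C.adjoint - W.starProjection.toLinearMap ∘ₗ C, fun x => ?_, fun w => ?_⟩
  · have hQ : ⟪W.starProjection (C x), x⟫_ℝ = ⟪C x, (P x : E)⟫_ℝ :=
      W.inner_starProjection_left_eq_right _ _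
    have hBP : ⟪B (P x), (P x : E)⟫_ℝ = 0 := by
      linarith [hB (P x) (P x), real_inner_comm (B (P x)) (P x : E)]
    simp only [LinearMap.sub_apply, LinearMap.comp_apply, ContinuousLinearMap.coe_coe,
      inner_sub_left, LinearMap.adjoint_inner_left, hQ, real_inner_comm x (C x), sub_self]
    rw [show C x = B (P x) from rfl, hBP, sub_zero]
  · have hCw : C w = B w := congrArg B (W.orthogonalProjectionOnto_mem_subspace_eq_self w)
    have hadj : C.adjoint w = -W.starProjection (B w) := ext_inner_right ℝ fun y => by
      rw [LinearMap.adjoint_inner_left, inner_neg_left, W.inner_starProjection_left_eq_right,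
        W.starProjection_apply, hB, neg_neg]
      rfl
    simp only [LinearMap.sub_apply, LinearMap.comp_apply, ContinuousLinearMap.coe_coe, hCw, hadj]
    abel

theorem exists_skew_map_add_eq_sub {S : Submodule ℝ E} (T₀ : S →ₗ[ℝ] E)
    (hiso : ∀ u v : S, ⟪T₀ u, T₀ v⟫_ℝ = ⟪(u : E), (v : E)⟫_ℝ)
    (hev : ∀ v : S, T₀ v = -(v : E) → v = 0) :
    ∃ A : E →ₗ[ℝ] E, (∀ x, ⟪A x, x⟫_ℝ = 0) ∧ ∀ v : S, A (v + T₀ v) = v - T₀ v := by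
  let L : S →ₗ[ℝ] E := S.subtype + T₀
  have hL : Function.Injective L := by
    rw [← LinearMap.ker_eq_bot, LinearMap.ker_eq_bot']
    exact fun v hv => hev v (eq_neg_of_add_eq_zero_right hv)
  let e := LinearEquiv.ofInjective L hL
  let B : LinearMap.range L →ₗ[ℝ] E := (S.subtype - T₀) ∘ₗ e.symm.toLinearMap
  have hskew (v u : S) : ⟪(v : E) - T₀ v, u + T₀ u⟫_ℝ = -⟪(v : E) + T₀ v, u - T₀ u⟫_ℝ := by
    simp only [inner_add_left, inner_add_right, inner_sub_left, inner_sub_right, hiso]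
    ring
  have hB : ∀ w w' : LinearMap.range L, ⟪B w, w'⟫_ℝ = -⟪(w : E), B w'⟫_ℝ := by
    intro w w'
    obtain ⟨v, rfl⟩ := e.surjective w
    obtain ⟨u, rfl⟩ := e.surjective w'
    simpa [B, e, L] using hskew v u
  obtain ⟨A, hA, hAB⟩ := exists_skew_extension B hB
  exact ⟨A, hA, fun v => by simpa [B, e, L] using hAB (e v)⟩

section Cayley

noncomputable def cayleyTransform (A : E →ₗ[ℝ] E) (hA : ∀ x, ⟪A x, x⟫_ℝ = 0) : E ≃ₗᵢ[ℝ] E :=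
  LinearIsometry.toLinearIsometryEquiv
    { toLinearMap := (1 - A) ∘ₗ
        (LinearEquiv.ofInjectiveEndo _ (injective_one_add_of_inner_apply_self_eq_zero hA)).symm
      norm_map' := fun x => by
        rw [LinearMap.comp_apply, LinearMap.sub_apply, Module.End.one_apply,
          norm_sub_apply_eq_norm_add_apply hA]
        exact congrArg norm ((LinearEquiv.ofInjectiveEndo _
          (injective_one_add_of_inner_apply_self_eq_zero hA)).apply_symm_apply x) } rfl

variable {A : E →ₗ[ℝ] E} (hA : ∀ x, ⟪A x, x⟫_ℝ = 0)
include hA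

theorem cayleyTransform_apply_add (y : E) : cayleyTransform A hA (y + A y) = y - A y := by
  change (1 - A) ((LinearEquiv.ofInjectiveEndo _ _).symm (LinearEquiv.ofInjectiveEndo _
    (injective_one_add_of_inner_apply_self_eq_zero hA) y)) = y - A y
  rw [LinearEquiv.symm_apply_apply]
  rfl

theorem map_add_cayleyTransform (x : E) :
    A (x + cayleyTransform A hA x) = x - cayleyTransform A hA x := by
  obtain ⟨y, rfl⟩ := LinearMap.injective_iff_surjective.mp
    (injective_one_add_of_inner_apply_self_eq_zero hA) x
  simp only [LinearMap.add_apply, Module.End.one_apply, cayleyTransform_apply_add hA]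
  rw [show y + A y + (y - A y) = (2 : ℝ) • y by module, map_smul]
  module

theorem cayleyTransform_apply_eq_of_map_add_eq_sub {x z : E} (h : A (x + z) = x - z) :
    cayleyTransform A hA x = z := by
  have hx := map_add_cayleyTransform hA x
  have : (1 + A : E →ₗ[ℝ] E) (z - cayleyTransform A hA x) = 0 := by
    simp only [LinearMap.add_apply, Module.End.one_apply, map_sub]
    rw [map_add] at h hx
    linear_combination (norm := module) h - hx
  exact (sub_eq_zero.mp (injective_one_add_of_inner_apply_self_eq_zero hA
    (this.trans (map_zero _).symm))).symm

theorem eq_zero_of_cayleyTransform_apply_eq_neg {x : E} (h : cayleyTransform A hA x = -x) :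
    x = 0 := by
  have hx := map_add_cayleyTransform hA x
  rw [h, add_neg_cancel, map_zero, sub_neg_eq_add, eq_comm, ← two_smul ℝ, smul_eq_zero] at hx
  exact hx.resolve_left two_ne_zero

end Cayley

/-- A linear isometry `T₀` from a subspace `S ⊆ ℝᵐ` into `ℝᵐ` with no nonzero vector
`v ∈ S` satisfying `T₀ v = -v` extends to a linear isometry of `ℝᵐ` whose only possible
real eigenvalue is `1`. -/
theorem stmt_4 {m : ℕ} (S : Submodule ℝ (EuclideanSpace ℝ (Fin m)))
    (T₀ : S →ₗ[ℝ] EuclideanSpace ℝ (Fin m))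
    (hiso : ∀ u v : S, ⟪T₀ u, T₀ v⟫_ℝ = ⟪(u : EuclideanSpace ℝ (Fin m)), (v : EuclideanSpace ℝ (Fin m))⟫_ℝ)
    (hev : ∀ v : S, T₀ v = -(v : EuclideanSpace ℝ (Fin m)) → v = 0) :
    ∃ T : EuclideanSpace ℝ (Fin m) ≃ₗᵢ[ℝ] EuclideanSpace ℝ (Fin m),
      (∀ v : S, T (v : EuclideanSpace ℝ (Fin m)) = T₀ v) ∧
      ∀ (lam : ℝ) (v : EuclideanSpace ℝ (Fin m)), v ≠ 0 → T v = lam • v → lam = 1 := by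
  obtain ⟨A, hA, hAS⟩ := exists_skew_map_add_eq_sub T₀ hiso hev
  refine ⟨cayleyTransform A hA, fun v => cayleyTransform_apply_eq_of_map_add_eq_sub hA (hAS v),
    fun lam v hv hTv => ?_⟩
  rcases (cayleyTransform A hA).toLinearIsometry.eq_one_or_eq_neg_one_of_apply_eq_smul hv hTv
    with h | rfl
  · exact h
  · exact absurd (eq_zero_of_cayleyTransform_apply_eq_neg hA (by rw [hTv, neg_one_smul])) hv
end

section
/- With the notation of the previous statement, suppose β(X,Y) = Cα(X,Y) - ⟨X,Y⟩δ for a skew-symmetric linear map C : N → N and a vector δ ∈ N, and suppose Hess(X,Y) = ⟨α(X,Y),δ⟩ for all X,Y. Then the bilinear form θ(X,Y) = (α+β, ⟨·,·⟩+Hess, α-β, ⟨·,·⟩-Hess)(X,Y) is null, i.e., ⟨⟨θ(X,Y),θ(Z,W)⟩⟩ = 0 for all X,Y,Z,W ∈ V. -/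
/-!
Because the pairing on `N × ℝ × N × ℝ` is split, `⟪⟪θ(X,Y), θ(Z,W)⟫⟫` collapses to twice the
mixed term `⟨α, β'⟩ + ⟨β, α'⟩ + ⟨,⟩ Hess' + Hess ⟨,⟩`. With `β = Cα - ⟨,⟩δ`, skew-symmetry of `C`
kills the `C`-part, and the `δ`-part cancels exactly against `Hess = ⟨α, δ⟩`.
-/

open scoped InnerProductSpace

noncomputable section

/-- The indefinite inner product of signature `(dim N + 1, dim N + 1)` on `N ⊕ ℝ ⊕ N ⊕ ℝ`. -/
def indefInner {N : Type*} [NormedAddCommGroup N] [InnerProductSpace ℝ N]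
    (a b : N × ℝ × N × ℝ) : ℝ :=
  ⟪a.1, b.1⟫_ℝ + a.2.1 * b.2.1 - ⟪a.2.2.1, b.2.2.1⟫_ℝ - a.2.2.2 * b.2.2.2

/-- The bilinear form `θ = (α+β, ⟨,⟩+Hess, α-β, ⟨,⟩-Hess)`. -/
def theta {V N : Type*} [NormedAddCommGroup V] [InnerProductSpace ℝ V]
    [NormedAddCommGroup N] [InnerProductSpace ℝ N]
    (α β : V → V → N) (Hess : V → V → ℝ) (X Y : V) : N × ℝ × N × ℝ :=
  (α X Y + β X Y, ⟪X, Y⟫_ℝ + Hess X Y, α X Y - β X Y, ⟪X, Y⟫_ℝ - Hess X Y)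

lemma indefInner_theta {V N : Type*} [NormedAddCommGroup V] [InnerProductSpace ℝ V]
    [NormedAddCommGroup N] [InnerProductSpace ℝ N]
    (α β : V → V → N) (Hess : V → V → ℝ) (X Y Z W : V) :
    indefInner (theta α β Hess X Y) (theta α β Hess Z W) =
      2 * (⟪α X Y, β Z W⟫_ℝ + ⟪β X Y, α Z W⟫_ℝ + ⟪X, Y⟫_ℝ * Hess Z W + Hess X Y * ⟪Z, W⟫_ℝ) := by
  simp only [indefInner, theta, inner_add_left, inner_add_right, inner_sub_left, inner_sub_right]
  ring

lemma inner_sub_smul_add_inner_sub_smul_add_eq_zero_of_skew {N : Type*}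
    [NormedAddCommGroup N] [InnerProductSpace ℝ N] {C : N →ₗ[ℝ] N}
    (hC : ∀ ξ η : N, ⟪C ξ, η⟫_ℝ = - ⟪ξ, C η⟫_ℝ) (ξ η δ : N) (a b : ℝ) :
    ⟪ξ, C η - b • δ⟫_ℝ + ⟪C ξ - a • δ, η⟫_ℝ + a * ⟪η, δ⟫_ℝ + ⟪ξ, δ⟫_ℝ * b = 0 := by
  rw [inner_sub_right, inner_sub_left, real_inner_smul_right, real_inner_smul_left, hC,
    real_inner_comm δ η]
  ring

theorem stmt_7_general {V N : Type*} [NormedAddCommGroup V] [InnerProductSpace ℝ V]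
    [NormedAddCommGroup N] [InnerProductSpace ℝ N]
    (α : V →ₗ[ℝ] V →ₗ[ℝ] N)
    (C : N →ₗ[ℝ] N) (hC : ∀ ξ η : N, ⟪C ξ, η⟫_ℝ = - ⟪ξ, C η⟫_ℝ) (δ : N)
    (β : V → V → N) (hβ : ∀ X Y : V, β X Y = C (α X Y) - ⟪X, Y⟫_ℝ • δ)
    (Hess : V → V → ℝ) (hHess : ∀ X Y : V, Hess X Y = ⟪α X Y, δ⟫_ℝ) :
    ∀ X Y Z W : V,
      indefInner (theta (fun a b => α a b) β Hess X Y)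
        (theta (fun a b => α a b) β Hess Z W) = 0 := by
  intro X Y Z W
  rw [indefInner_theta, hβ, hβ, hHess, hHess,
    inner_sub_smul_add_inner_sub_smul_add_eq_zero_of_skew hC, mul_zero]

/-- If `β = Cα - ⟨,⟩δ` with `C` skew-symmetric and `Hess = ⟨α(·,·),δ⟩`, then `θ` is null. -/
theorem stmt_7 {V N : Type*} [NormedAddCommGroup V] [InnerProductSpace ℝ V]
    [NormedAddCommGroup N] [InnerProductSpace ℝ N]
    (α : V →ₗ[ℝ] V →ₗ[ℝ] N) (hα : ∀ X Y : V, α X Y = α Y X)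
    (C : N →ₗ[ℝ] N) (hC : ∀ ξ η : N, ⟪C ξ, η⟫_ℝ = - ⟪ξ, C η⟫_ℝ) (δ : N)
    (β : V → V → N) (hβ : ∀ X Y : V, β X Y = C (α X Y) - ⟪X, Y⟫_ℝ • δ)
    (Hess : V → V → ℝ) (hHess : ∀ X Y : V, Hess X Y = ⟪α X Y, δ⟫_ℝ) :
    ∀ X Y Z W : V,
      indefInner (theta (fun a b => α a b) β Hess X Y)
        (theta (fun a b => α a b) β Hess Z W) = 0 :=
  stmt_7_general α C hC δ β hβ Hess hHess

end
end

section
/- Let V, N be real inner product spaces with dim V ≥ 2, and let α, β : V × V → N be symmetric bilinear maps. If β(X,Y) = Cα(X,Y) for a linear map C : N → N whenever ⟨X,Y⟩ = 0, then there exists δ ∈ N such that β(X,Y) = Cα(X,Y) - ⟨X,Y⟩δ for all X,Y ∈ V. -/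
open scoped InnerProductSpace

/-- If symmetric bilinear maps `α, β` satisfy `β(X,Y) = C α(X,Y)` for a linear map `C`
whenever `X ⊥ Y`, and `dim V ≥ 2`, then there is `δ ∈ N` with
`β(X,Y) = C α(X,Y) - ⟨X,Y⟩ δ` for all `X, Y`. -/
theorem stmt_8 {V N : Type*} [NormedAddCommGroup V] [InnerProductSpace ℝ V]
    [NormedAddCommGroup N] [InnerProductSpace ℝ N] [FiniteDimensional ℝ V]
    (hdim : 2 ≤ Module.finrank ℝ V)
    (α β : V →ₗ[ℝ] V →ₗ[ℝ] N)
    (hα : ∀ X Y : V, α X Y = α Y X) (hβ : ∀ X Y : V, β X Y = β Y X)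
    (C : N →ₗ[ℝ] N)
    (h : ∀ X Y : V, ⟪X, Y⟫_ℝ = 0 → β X Y = C (α X Y)) :
    ∃ δ : N, ∀ X Y : V, β X Y = C (α X Y) - ⟪X, Y⟫_ℝ • δ := by
  have hnt : Nontrivial V := by
    have : 0 < Module.finrank ℝ V := by omega
    exact Module.nontrivial_of_finrank_pos this
  obtain ⟨x, hx⟩ := exists_ne (0 : V)
  set e : V := ‖x‖⁻¹ • x with he_def
  have he : ‖e‖ = 1 := by
    rw [he_def, norm_smul, norm_inv, norm_norm]
    field_simp [norm_ne_zero_iff.mpr hx]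
  set δ : N := C (α e e) - β e e with hδ_def
  -- for vectors of equal norm, the diagonal values agree
  have hsame : ∀ X Y : V, ‖X‖ = ‖Y‖ → C (α X X) - β X X = C (α Y Y) - β Y Y := by
    intro X Y hXY
    have horth : ⟪X + Y, X - Y⟫_ℝ = 0 := by
      rw [inner_sub_right, inner_add_left, inner_add_left,
        real_inner_self_eq_norm_sq, real_inner_self_eq_norm_sq,
        real_inner_comm Y X, hXY]
      ring
    have key := h (X + Y) (X - Y) horth
    simp only [map_add, map_sub, LinearMap.add_apply, LinearMap.sub_apply] at key
    rw [hβ Y X, hα Y X] at key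
    have h1 : β X X - β Y Y = C (α X X) - C (α Y Y) := by
      calc β X X - β Y Y = β X X + β X Y - (β X Y + β Y Y) := by abel
        _ = C (α X X) + C (α X Y) - (C (α X Y) + C (α Y Y)) := key
        _ = C (α X X) - C (α Y Y) := by abel
    calc C (α X X) - β X X
        = C (α X X) - C (α Y Y) - (β X X - β Y Y) + (C (α Y Y) - β Y Y) := by abel
      _ = C (α Y Y) - β Y Y := by rw [← h1]; abel
  have hunit : ∀ X : V, ‖X‖ = 1 → C (α X X) - β X X = δ := fun X hX =>
    hsame X e (by rw [hX, he])
  -- diagonal formula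
  have hdiag : ∀ X : V, C (α X X) - β X X = ⟪X, X⟫_ℝ • δ := by
    intro X
    rcases eq_or_ne X 0 with rfl | hX
    · simp
    · set u : V := ‖X‖⁻¹ • X with hu_def
      have hXn : ‖X‖ ≠ 0 := norm_ne_zero_iff.mpr hX
      have hu : ‖u‖ = 1 := by
        rw [hu_def, norm_smul, norm_inv, norm_norm]; field_simp
      have hXu : X = ‖X‖ • u := by
        rw [hu_def, smul_smul]; field_simp; rw [one_smul]
      have h1 := hunit u hu
      calc C (α X X) - β X X
          = (‖X‖ * ‖X‖) • (C (α u u) - β u u) := by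
            conv_lhs => rw [hXu]
            simp only [map_smul, LinearMap.smul_apply, smul_sub, smul_smul]
        _ = ⟪X, X⟫_ℝ • δ := by rw [h1, real_inner_self_eq_norm_sq]; ring_nf
  refine ⟨δ, fun X Y => ?_⟩
  have hXY := hdiag (X + Y)
  have hX := hdiag X
  have hY := hdiag Y
  simp only [map_add, LinearMap.add_apply, inner_add_add_self] at hXY
  rw [hα Y X, hβ Y X] at hXY
  have h2 : (2 : ℝ) • (C (α X Y) - β X Y) = (2 * ⟪X, Y⟫_ℝ) • δ := by
    have e1 : C (α X X) + C (α X Y) + (C (α X Y) + C (α Y Y))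
        - (β X X + β X Y + (β X Y + β Y Y))
        = (⟪X, X⟫_ℝ + 2 * ⟪X, Y⟫_ℝ + ⟪Y, Y⟫_ℝ) • δ := by
      rw [hXY]; congr 1; rw [real_inner_comm Y X]; ring
    rw [add_smul, add_smul] at e1
    rw [← hX, ← hY] at e1
    have e2 : (2 : ℝ) • (C (α X Y) - β X Y)
        = C (α X X) + C (α X Y) + (C (α X Y) + C (α Y Y))
          - (β X X + β X Y + (β X Y + β Y Y))
          - (C (α X X) - β X X) - (C (α Y Y) - β Y Y) := by
      rw [two_smul]; abel
    rw [e2, e1]; abel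
  have h3 : C (α X Y) - β X Y = ⟪X, Y⟫_ℝ • δ := by
    have := congrArg (fun z => (2 : ℝ)⁻¹ • z) h2
    simpa [smul_smul] using this
  rw [← h3]; abel
end

section
/- Every conformal Killing vector field X on a connected open subset of ℝⁿ, n ≥ 3, has the form X(x) = (⟨x,v⟩ + λ)x - (1/2)‖x‖²v + Cx + w, where λ ∈ ℝ, v, w ∈ ℝⁿ, and C is a skew-symmetric endomorphism of ℝⁿ; moreover its conformal factor is ρ(x) = ⟨x,v⟩ + λ. -/
open scoped InnerProductSpace
open Module ContinuousLinearMap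

-- constancy from zero derivative on open preconnected set
theorem myconst {E F : Type*} [NormedAddCommGroup E] [NormedSpace ℝ E]
    [NormedAddCommGroup F] [NormedSpace ℝ F] {s : Set E} (hso : IsOpen s)
    (hsc : IsPreconnected s) {f : E → F}
    (hf : ∀ x ∈ s, HasFDerivAt f (0 : E →L[ℝ] F) x)
    {x y : E} (hx : x ∈ s) (hy : y ∈ s) : f x = f y := by
  -- local constancy on balls
  have hloc : ∀ z ∈ s, ∀ᶠ u in nhds z, f u = f z := by
    intro z hz
    obtain ⟨ε, hε, hball⟩ := Metric.isOpen_iff.1 hso z hz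
    filter_upwards [Metric.ball_mem_nhds z hε] with u hu
    refine (convex_ball z ε).is_const_of_fderivWithin_eq_zero
      (fun w hw => ((hf w (hball hw)).differentiableAt).differentiableWithinAt)
      (fun w hw => ?_) hu (Metric.mem_ball_self hε)
    rw [fderivWithin_of_isOpen Metric.isOpen_ball hw, (hf w (hball hw)).fderiv]
  -- clopen argument
  classical
  let u : Set E := {z | z ∈ s ∧ f z = f x}
  let v : Set E := {z | z ∈ s ∧ f z ≠ f x}
  have hu : IsOpen u := by
    rw [isOpen_iff_mem_nhds]
    rintro z ⟨hz, hfz⟩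
    filter_upwards [hloc z hz, hso.mem_nhds hz] with w hw hws
    exact ⟨hws, hw.trans hfz⟩
  have hv : IsOpen v := by
    rw [isOpen_iff_mem_nhds]
    rintro z ⟨hz, hfz⟩
    filter_upwards [hloc z hz, hso.mem_nhds hz] with w hw hws
    exact ⟨hws, hw.trans_ne hfz⟩
  by_contra hne
  obtain ⟨w, hw⟩ := hsc u v hu hv (fun z hz => by
      by_cases h : f z = f x
      · exact Or.inl ⟨hz, h⟩
      · exact Or.inr ⟨hz, h⟩)
    ⟨x, hx, hx, rfl⟩ ⟨y, hy, hy, fun h => hne h.symm⟩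
  exact hw.2.2.2 hw.2.1.2

-- existence of a unit vector orthogonal to two given vectors
theorem ortho3 {E : Type*} [NormedAddCommGroup E] [InnerProductSpace ℝ E]
    [FiniteDimensional ℝ E] (hn : 3 ≤ finrank ℝ E) (V Y : E) :
    ∃ W : E, ‖W‖ = 1 ∧ ⟪V, W⟫_ℝ = 0 ∧ ⟪Y, W⟫_ℝ = 0 := by
  set S : Submodule ℝ E := Submodule.span ℝ {V, Y}
  have hS : finrank ℝ S ≤ 2 := by
    classical
    have h := finrank_span_le_card (R := ℝ) ({V, Y} : Set E)
    refine le_trans h ?_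
    refine le_trans (Finset.card_le_card ?_) (Finset.card_insert_le V {Y}) |>.trans (by simp)
    intro z hz
    simpa using (Set.mem_toFinset.1 hz)
  have horth : Sᗮ ≠ ⊥ := by
    intro h
    have h1 : finrank ℝ S + finrank ℝ Sᗮ = finrank ℝ E := Submodule.finrank_add_finrank_orthogonal S
    rw [h, finrank_bot] at h1
    omega
  obtain ⟨W₀, hW₀S, hW₀⟩ := Submodule.exists_mem_ne_zero_of_ne_bot horth
  refine ⟨‖W₀‖⁻¹ • W₀, ?_, ?_, ?_⟩
  · rw [norm_smul, norm_inv, norm_norm, inv_mul_cancel₀ (norm_ne_zero_iff.2 hW₀)]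
  · rw [real_inner_smul_right, (Submodule.mem_orthogonal S W₀).1 hW₀S V
      (Submodule.subset_span (by simp)), mul_zero]
  · rw [real_inner_smul_right, (Submodule.mem_orthogonal S W₀).1 hW₀S Y
      (Submodule.subset_span (by simp)), mul_zero]

-- algebraic vanishing of the Hessian
theorem hess_zero {E : Type*} [NormedAddCommGroup E] [InnerProductSpace ℝ E]
    [FiniteDimensional ℝ E] (hn : 3 ≤ finrank ℝ E) (H : E → E → ℝ)
    (hrel : ∀ V W Y Z : E, H V Y * ⟪W, Z⟫_ℝ - H V Z * ⟪W, Y⟫_ℝ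
      = H W Y * ⟪V, Z⟫_ℝ - H W Z * ⟪V, Y⟫_ℝ) :
    ∀ V Y : E, H V Y = 0 := by
  have key : ∀ V Y W : E, ‖W‖ = 1 → ⟪V, W⟫_ℝ = 0 → ⟪Y, W⟫_ℝ = 0 →
      H V Y = - (H W W * ⟪V, Y⟫_ℝ) := by
    intro V Y W hW hVW hYW
    have h := hrel V W Y W
    have hWW : ⟪W, W⟫_ℝ = 1 := by
      rw [real_inner_self_eq_norm_sq, hW]; norm_num
    rw [hWW, real_inner_comm Y W, hYW, hVW] at h
    linarith [h]
  have diag : ∀ W : E, ‖W‖ = 1 → H W W = 0 := by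
    intro W hW
    obtain ⟨W₂, hW₂, hWW₂, _⟩ := ortho3 hn W W
    obtain ⟨W₃, hW₃, hWW₃, hW₂W₃⟩ := ortho3 hn W W₂
    have hWW : ⟪W, W⟫_ℝ = 1 := by rw [real_inner_self_eq_norm_sq, hW]; norm_num
    have hW₂W₂ : ⟪W₂, W₂⟫_ℝ = 1 := by rw [real_inner_self_eq_norm_sq, hW₂]; norm_num
    have e1 : H W W = - (H W₂ W₂ * ⟪W, W⟫_ℝ) := key W W W₂ hW₂ hWW₂ hWW₂
    have e2 : H W W = - (H W₃ W₃ * ⟪W, W⟫_ℝ) := key W W W₃ hW₃ hWW₃ hWW₃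
    have e3 : H W₂ W₂ = - (H W₃ W₃ * ⟪W₂, W₂⟫_ℝ) := key W₂ W₂ W₃ hW₃ hW₂W₃ hW₂W₃
    rw [hWW] at e1 e2; rw [hW₂W₂] at e3
    linarith
  intro V Y
  obtain ⟨W, hW, hVW, hYW⟩ := ortho3 hn V Y
  rw [key V Y W hW hVW hYW, diag W hW, zero_mul, neg_zero]


variable {E : Type*} [NormedAddCommGroup E] [InnerProductSpace ℝ E] [FiniteDimensional ℝ E]

noncomputable def psi (v : E) : E →ₗ[ℝ] E →L[ℝ] E where
  toFun V := (innerSL ℝ v).smulRight V + ⟪V, v⟫_ℝ • ContinuousLinearMap.id ℝ E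
    - (innerSL ℝ V).smulRight v
  map_add' a b := by
    ext W
    simp only [ContinuousLinearMap.add_apply, ContinuousLinearMap.sub_apply,
      ContinuousLinearMap.smul_apply, ContinuousLinearMap.coe_id', id_eq,
      smulRight_apply, innerSL_apply_apply, inner_add_left, inner_add_right, add_smul]
    module
  map_smul' c a := by
    ext W
    simp only [ContinuousLinearMap.add_apply, ContinuousLinearMap.sub_apply,
      ContinuousLinearMap.smul_apply, ContinuousLinearMap.coe_id', id_eq,
      smulRight_apply, innerSL_apply_apply, inner_smul_left, inner_smul_right,
      RingHom.id_apply, smul_smul, starRingEnd_apply, star_trivial]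
    module

noncomputable def phi (v : E) : E →L[ℝ] E →L[ℝ] E := LinearMap.toContinuousLinearMap (psi v)

theorem phi_apply (v V W : E) :
    phi v V W = ⟪W, v⟫_ℝ • V + ⟪V, v⟫_ℝ • W - ⟪V, W⟫_ℝ • v := by
  show psi v V W = _
  simp only [psi, LinearMap.coe_mk, AddHom.coe_mk, ContinuousLinearMap.add_apply,
    ContinuousLinearMap.sub_apply, ContinuousLinearMap.smul_apply,
    ContinuousLinearMap.coe_id', id_eq, smulRight_apply, innerSL_apply_apply]
  rw [real_inner_comm v W]

theorem hasFDerivAt_Q (v : E) (lam : ℝ) (x : E) :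
    HasFDerivAt (fun y : E => (⟪y, v⟫_ℝ + lam) • y - ((1 / 2) * ‖y‖ ^ 2) • v)
      (phi v x + lam • ContinuousLinearMap.id ℝ E) x := by
  have hc : HasFDerivAt (fun y : E => ⟪y, v⟫_ℝ + lam) (innerSL ℝ v) x := by
    have h1 : HasFDerivAt (fun y : E => (innerSL ℝ v) y + lam) (innerSL ℝ v) x :=
      (innerSL ℝ v).hasFDerivAt.add_const lam
    refine h1.congr_of_eventuallyEq (Filter.Eventually.of_forall fun y => ?_)
    simp [real_inner_comm]
  have hs1 : HasFDerivAt (fun y : E => (⟪y, v⟫_ℝ + lam) • y)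
      ((⟪x, v⟫_ℝ + lam) • ContinuousLinearMap.id ℝ E + (innerSL ℝ v).smulRight x) x := by
    have := hc.smul (hasFDerivAt_id x)
    simpa [Pi.smul_def'] using this
  have hn2 : HasFDerivAt (fun y : E => (1 / 2) * ‖y‖ ^ 2) (innerSL ℝ x) x := by
    have h1 : HasFDerivAt (fun y : E => ⟪y, y⟫_ℝ)
        ((fderivInnerCLM ℝ (x, x)).comp ((ContinuousLinearMap.id ℝ E).prod
          (ContinuousLinearMap.id ℝ E))) x := by
      have := (hasFDerivAt_id x).inner ℝ (hasFDerivAt_id x)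
      simpa using this
    have h2 := h1.const_mul (1 / 2 : ℝ)
    have h3 : (fun y : E => (1 / 2) * ‖y‖ ^ 2) = fun y : E => (1 / 2) * ⟪y, y⟫_ℝ := by
      funext y
      rw [real_inner_self_eq_norm_sq]
    rw [h3]
    refine h2.congr_fderiv ?_
    ext W
    simp only [ContinuousLinearMap.coe_comp', Function.comp_apply,
      ContinuousLinearMap.smul_apply, ContinuousLinearMap.prod_apply,
      ContinuousLinearMap.coe_id', id_eq, fderivInnerCLM_apply, innerSL_apply_apply,
      smul_eq_mul]
    rw [real_inner_comm W x]
    ring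
  have hs2 : HasFDerivAt (fun y : E => ((1 / 2) * ‖y‖ ^ 2) • v)
      ((innerSL ℝ x).smulRight v) x := by
    have := hn2.smul (hasFDerivAt_const v x)
    simpa [Pi.smul_def'] using this
  have := hs1.sub hs2
  convert this using 1
  · rfl
  ext W
  rw [ContinuousLinearMap.add_apply, phi_apply]
  simp only [ContinuousLinearMap.smul_apply, ContinuousLinearMap.coe_id', id_eq,
    ContinuousLinearMap.sub_apply, ContinuousLinearMap.add_apply, smulRight_apply,
    innerSL_apply_apply]
  rw [real_inner_comm v W]
  module

theorem Dq_symm (v : E) (lam : ℝ) (x a b : E) :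
    ⟪(phi v x + lam • ContinuousLinearMap.id ℝ E) a, b⟫_ℝ
      + ⟪(phi v x + lam • ContinuousLinearMap.id ℝ E) b, a⟫_ℝ
      = 2 * (⟪x, v⟫_ℝ + lam) * ⟪a, b⟫_ℝ := by
  simp only [ContinuousLinearMap.add_apply, ContinuousLinearMap.smul_apply,
    ContinuousLinearMap.coe_id', id_eq, phi_apply]
  simp only [inner_add_left, inner_sub_left, real_inner_smul_left]
  rw [real_inner_comm b a, real_inner_comm v b, real_inner_comm v a]
  ring


set_option maxHeartbeats 3000000 in
theorem main_aux {E : Type*} [NormedAddCommGroup E] [InnerProductSpace ℝ E]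
    [FiniteDimensional ℝ E] (hfr : 3 ≤ finrank ℝ E)
    (U : Set E) (hUopen : IsOpen U) (hUconn : IsConnected U)
    (X : E → E) (ρ : E → ℝ)
    (hX : ContDiffOn ℝ (⊤ : ℕ∞) X U) (hρ : ContDiffOn ℝ (⊤ : ℕ∞) ρ U)
    (hck : ∀ x ∈ U, ∀ Y Z : E,
      ⟪fderiv ℝ X x Y, Z⟫_ℝ + ⟪fderiv ℝ X x Z, Y⟫_ℝ = 2 * ρ x * ⟪Y, Z⟫_ℝ) :
    ∃ (lam : ℝ) (v w : E) (C : E →ₗ[ℝ] E),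
      (∀ a b : E, ⟪C a, b⟫_ℝ = - ⟪a, C b⟫_ℝ) ∧
      ∀ x ∈ U,
        X x = (⟪x, v⟫_ℝ + lam) • x - ((1 / 2) * ‖x‖ ^ 2) • v + C x + w ∧
        ρ x = ⟪x, v⟫_ℝ + lam := by
  have hU' : ∀ x ∈ U, U ∈ nhds x := fun x hx => hUopen.mem_nhds hx
  have hXat : ∀ x ∈ U, ContDiffAt ℝ (⊤ : ℕ∞) X x := fun x hx => hX.contDiffAt (hU' x hx)
  have hρat : ∀ x ∈ U, ContDiffAt ℝ (⊤ : ℕ∞) ρ x := fun x hx => hρ.contDiffAt (hU' x hx)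
  set f₁ : E → E →L[ℝ] E := fderiv ℝ X with hf₁def
  have hf₁at : ∀ x ∈ U, ContDiffAt ℝ (⊤ : ℕ∞) f₁ x := fun x hx =>
    (hXat x hx).fderiv_right (by simp)
  set B : E → E →L[ℝ] E →L[ℝ] E := fun x => fderiv ℝ f₁ x with hBdef
  have hBat : ∀ x ∈ U, HasFDerivAt f₁ (B x) x := fun x hx =>
    ((hf₁at x hx).differentiableAt (by simp)).hasFDerivAt
  have hBsymm : ∀ x ∈ U, ∀ V W : E, B x V W = B x W V := fun x hx =>
    (hXat x hx).isSymmSndFDerivAt (by simp; exact WithTop.coe_le_coe.2 (le_top : (2 : ℕ∞) ≤ ⊤))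
  have hρd : ∀ x ∈ U, HasFDerivAt ρ (fderiv ℝ ρ x) x := fun x hx =>
    ((hρat x hx).differentiableAt (by simp)).hasFDerivAt
  have hXd : ∀ x ∈ U, HasFDerivAt X (f₁ x) x := fun x hx =>
    ((hXat x hx).differentiableAt (by simp)).hasFDerivAt
  -- second derivative identity
  have key0 : ∀ x ∈ U, ∀ W Y Z : E,
      ⟪B x W Y, Z⟫_ℝ + ⟪B x W Z, Y⟫_ℝ = 2 * fderiv ℝ ρ x W * ⟪Y, Z⟫_ℝ := by
    intro x hx W Y Z
    have hY : HasFDerivAt (fun y => f₁ y Y)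
        ((ContinuousLinearMap.apply ℝ E Y).comp (B x)) x :=
      (ContinuousLinearMap.apply ℝ E Y).hasFDerivAt.comp x (hBat x hx)
    have hZ : HasFDerivAt (fun y => f₁ y Z)
        ((ContinuousLinearMap.apply ℝ E Z).comp (B x)) x :=
      (ContinuousLinearMap.apply ℝ E Z).hasFDerivAt.comp x (hBat x hx)
    have hiY := hY.inner ℝ (hasFDerivAt_const Z x)
    have hiZ := hZ.inner ℝ (hasFDerivAt_const Y x)
    have hρ2 := ((hρd x hx).const_mul (2 : ℝ)).mul_const (⟪Y, Z⟫_ℝ)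
    have htot := (hiY.add hiZ).sub hρ2
    have hzero : HasFDerivAt
        (fun y => (⟪f₁ y Y, Z⟫_ℝ + ⟪f₁ y Z, Y⟫_ℝ) - 2 * ρ y * ⟪Y, Z⟫_ℝ)
        (0 : E →L[ℝ] ℝ) x := by
      refine (hasFDerivAt_const (0 : ℝ) x).congr_of_eventuallyEq ?_
      filter_upwards [hU' x hx] with y hy
      have := hck y hy Y Z
      simp [this]
    have huniq := htot.unique hzero
    have happ := congrArg (fun L : E →L[ℝ] ℝ => L W) huniq
    simp only [ContinuousLinearMap.coe_comp', Function.comp_apply,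
      ContinuousLinearMap.sub_apply, ContinuousLinearMap.add_apply,
      ContinuousLinearMap.smul_apply, ContinuousLinearMap.zero_apply,
      ContinuousLinearMap.prod_apply, fderivInnerCLM_apply,
      ContinuousLinearMap.apply_apply, inner_zero_right, smul_eq_mul,
      zero_add, add_zero] at happ
    linarith
  have key1 : ∀ x ∈ U, ∀ W Y Z : E,
      ⟪B x W Y, Z⟫_ℝ = fderiv ℝ ρ x W * ⟪Y, Z⟫_ℝ + fderiv ℝ ρ x Y * ⟪W, Z⟫_ℝ
        - fderiv ℝ ρ x Z * ⟪W, Y⟫_ℝ := by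
    intro x hx W Y Z
    have ha := key0 x hx W Y Z
    have hb := key0 x hx Y W Z
    have hc := key0 x hx Z W Y
    rw [hBsymm x hx Y W] at hb
    rw [hBsymm x hx Z W, hBsymm x hx Z Y] at hc
    linarith
  -- third derivative data
  have hρ1at : ∀ x ∈ U, ContDiffAt ℝ (⊤ : ℕ∞) (fderiv ℝ ρ) x := fun x hx =>
    (hρat x hx).fderiv_right (by simp)
  have hHd : ∀ x ∈ U, HasFDerivAt (fderiv ℝ ρ) (fderiv ℝ (fderiv ℝ ρ) x) x := fun x hx =>
    ((hρ1at x hx).differentiableAt (by simp)).hasFDerivAt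
  have hHsymm : ∀ x ∈ U, ∀ V W : E,
      fderiv ℝ (fderiv ℝ ρ) x V W = fderiv ℝ (fderiv ℝ ρ) x W V := fun x hx =>
    (hρat x hx).isSymmSndFDerivAt (by simp; exact WithTop.coe_le_coe.2 (le_top : (2 : ℕ∞) ≤ ⊤))
  have hTat : ∀ x ∈ U, HasFDerivAt (fun y => fderiv ℝ f₁ y)
      (fderiv ℝ (fderiv ℝ f₁) x) x := fun x hx =>
    (((hf₁at x hx).fderiv_right (m := (⊤ : ℕ∞)) (by simp)).differentiableAt (by simp)).hasFDerivAt
  have hTsymm : ∀ x ∈ U, ∀ V W : E,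
      fderiv ℝ (fderiv ℝ f₁) x V W = fderiv ℝ (fderiv ℝ f₁) x W V := fun x hx =>
    (hf₁at x hx).isSymmSndFDerivAt (by simp; exact WithTop.coe_le_coe.2 (le_top : (2 : ℕ∞) ≤ ⊤))
  have key2 : ∀ x ∈ U, ∀ V W Y Z : E,
      ⟪fderiv ℝ (fderiv ℝ f₁) x V W Y, Z⟫_ℝ
        = fderiv ℝ (fderiv ℝ ρ) x V W * ⟪Y, Z⟫_ℝ
          + fderiv ℝ (fderiv ℝ ρ) x V Y * ⟪W, Z⟫_ℝ
          - fderiv ℝ (fderiv ℝ ρ) x V Z * ⟪W, Y⟫_ℝ := by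
    intro x hx V W Y Z
    have hW1' := (ContinuousLinearMap.apply ℝ (E →L[ℝ] E) W).hasFDerivAt.comp (F := E →L[ℝ] E →L[ℝ] E) x (hTat x hx)
    have hW1 : HasFDerivAt (fun y => fderiv ℝ f₁ y W)
        ((ContinuousLinearMap.apply ℝ (E →L[ℝ] E) W).comp (fderiv ℝ (fderiv ℝ f₁) x)) x := hW1'
    have hWY' := (ContinuousLinearMap.apply ℝ E Y).hasFDerivAt.comp x hW1
    have hWY : HasFDerivAt (fun y => fderiv ℝ f₁ y W Y)
        ((ContinuousLinearMap.apply ℝ E Y).comp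
          ((ContinuousLinearMap.apply ℝ (E →L[ℝ] E) W).comp (fderiv ℝ (fderiv ℝ f₁) x))) x := hWY'
    have hin := hWY.inner ℝ (hasFDerivAt_const Z x)
    have hdW := (((ContinuousLinearMap.apply ℝ ℝ W).hasFDerivAt.comp x
      (hHd x hx))).mul_const (⟪Y, Z⟫_ℝ)
    have hdY := (((ContinuousLinearMap.apply ℝ ℝ Y).hasFDerivAt.comp x
      (hHd x hx))).mul_const (⟪W, Z⟫_ℝ)
    have hdZ := (((ContinuousLinearMap.apply ℝ ℝ Z).hasFDerivAt.comp x
      (hHd x hx))).mul_const (⟪W, Y⟫_ℝ)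
    have htot := hin.sub ((hdW.add hdY).sub hdZ)
    have hzero : HasFDerivAt
        (fun y => ⟪fderiv ℝ f₁ y W Y, Z⟫_ℝ
          - (fderiv ℝ ρ y W * ⟪Y, Z⟫_ℝ + fderiv ℝ ρ y Y * ⟪W, Z⟫_ℝ
            - fderiv ℝ ρ y Z * ⟪W, Y⟫_ℝ))
        (0 : E →L[ℝ] ℝ) x := by
      refine (hasFDerivAt_const (0 : ℝ) x).congr_of_eventuallyEq ?_
      filter_upwards [hU' x hx] with y hy
      have := key1 y hy W Y Z
      exact sub_eq_zero.2 this
    have huniq := htot.unique hzero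
    have happ := congrArg (fun L : E →L[ℝ] ℝ => L V) huniq
    simp only [ContinuousLinearMap.coe_comp', Function.comp_apply,
      ContinuousLinearMap.sub_apply, ContinuousLinearMap.add_apply,
      ContinuousLinearMap.smul_apply, ContinuousLinearMap.zero_apply,
      ContinuousLinearMap.prod_apply, fderivInnerCLM_apply,
      ContinuousLinearMap.apply_apply, inner_zero_right, smul_eq_mul,
      zero_add, add_zero] at happ
    linarith
  -- Hessian of ρ vanishes
  have hHzero : ∀ x ∈ U, ∀ V W : E, fderiv ℝ (fderiv ℝ ρ) x V W = 0 := by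
    intro x hx
    refine hess_zero hfr (fun a b => fderiv ℝ (fderiv ℝ ρ) x a b) ?_
    intro V W Y Z
    have h1 := key2 x hx V W Y Z
    have h2 := key2 x hx W V Y Z
    rw [hTsymm x hx V W] at h1
    have h3 := hHsymm x hx V W
    linarith [h1, h2, h3.symm ▸ h1]
  -- dρ is constant
  obtain ⟨x₀, hx₀⟩ := hUconn.nonempty
  have hρ1at : ∀ x ∈ U, ContDiffAt ℝ (⊤ : ℕ∞) (fderiv ℝ ρ) x := fun x hx =>
    (hρat x hx).fderiv_right (by simp)
  have hdρconst : ∀ x ∈ U, fderiv ℝ ρ x = fderiv ℝ ρ x₀ := by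
    intro x hx
    refine myconst hUopen hUconn.isPreconnected (f := fderiv ℝ ρ) ?_ hx hx₀
    intro y hy
    have h := ((hρ1at y hy).differentiableAt (by simp)).hasFDerivAt
    have : fderiv ℝ (fderiv ℝ ρ) y = 0 := by
      ext V W
      exact hHzero y hy V W
    rwa [this] at h
  obtain ⟨dv, hdvdef⟩ : ∃ dv : E →L[ℝ] ℝ, dv = fderiv ℝ ρ x₀ := ⟨_, rfl⟩
  rw [← hdvdef] at hdρconst
  obtain ⟨v, hvdef⟩ : ∃ v : E, v = (InnerProductSpace.toDual ℝ E).symm dv := ⟨_, rfl⟩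
  have hdv : ∀ y : E, dv y = ⟪y, v⟫_ℝ := by
    intro y
    rw [real_inner_comm, hvdef, InnerProductSpace.toDual_symm_apply]
  obtain ⟨lam, hlamdef⟩ : ∃ lam : ℝ, lam = ρ x₀ - ⟪x₀, v⟫_ℝ := ⟨_, rfl⟩
  have hρeq : ∀ x ∈ U, ρ x = ⟪x, v⟫_ℝ + lam := by
    intro x hx
    have hgd : ∀ y ∈ U, HasFDerivAt (fun z => ρ z - dv z) (0 : E →L[ℝ] ℝ) y := by
      intro y hy
      have h1 : HasFDerivAt ρ dv y := by
        have := hρd y hy; rwa [hdρconst y hy] at this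
      have h2 : HasFDerivAt (fun z => dv z) dv y := dv.hasFDerivAt
      simpa [Pi.sub_def] using h1.sub h2
    have := myconst hUopen hUconn.isPreconnected hgd hx hx₀
    have h3 : ρ x - dv x = ρ x₀ - dv x₀ := this
    rw [hdv x, hdv x₀] at h3
    rw [hlamdef]
    linarith
  -- f₁ - Dq has zero derivative
  have hBφ : ∀ x ∈ U, B x = phi v := by
    intro x hx
    ext V W
    apply ext_inner_right ℝ
    intro Z
    rw [key1 x hx V W Z, hdρconst x hx, phi_apply v V W]
    simp only [inner_sub_left, inner_add_left, real_inner_smul_left]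
    rw [hdv V, hdv W, hdv Z, real_inner_comm Z v]
    ring
  have hgd2 : ∀ x ∈ U, HasFDerivAt
      (fun y => f₁ y - (phi v y + lam • ContinuousLinearMap.id ℝ E))
      (0 : E →L[ℝ] E →L[ℝ] E) x := by
    intro x hx
    have h1 : HasFDerivAt (fun y => phi v y + lam • ContinuousLinearMap.id ℝ E)
        (phi v : E →L[ℝ] E →L[ℝ] E) x := (phi v).hasFDerivAt.add_const _
    have := (hBat x hx).sub h1
    rwa [hBφ x hx, sub_self] at this
  obtain ⟨C₀, hC₀def⟩ : ∃ C₀ : E →L[ℝ] E,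
      C₀ = f₁ x₀ - (phi v x₀ + lam • ContinuousLinearMap.id ℝ E) := ⟨_, rfl⟩
  have hC : ∀ x ∈ U, f₁ x - (phi v x + lam • ContinuousLinearMap.id ℝ E) = C₀ := by
    intro x hx
    rw [hC₀def]
    exact myconst hUopen hUconn.isPreconnected hgd2 hx hx₀
  have hhd : ∀ x ∈ U, HasFDerivAt
      (fun y => X y - ((⟪y, v⟫_ℝ + lam) • y - ((1 / 2) * ‖y‖ ^ 2) • v) - C₀ y)
      (0 : E →L[ℝ] E) x := by
    intro x hx
    have := ((hXd x hx).sub (hasFDerivAt_Q v lam x)).sub C₀.hasFDerivAt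
    have h2 : f₁ x - (phi v x + lam • ContinuousLinearMap.id ℝ E) - C₀ = 0 := by
      rw [hC x hx, sub_self]
    rwa [h2] at this
  obtain ⟨w, hwdef⟩ : ∃ w : E,
      w = X x₀ - ((⟪x₀, v⟫_ℝ + lam) • x₀ - ((1 / 2) * ‖x₀‖ ^ 2) • v) - C₀ x₀ := ⟨_, rfl⟩
  have hfinal : ∀ x ∈ U,
      X x = ((⟪x, v⟫_ℝ + lam) • x - ((1 / 2) * ‖x‖ ^ 2) • v) + C₀ x + w := by
    intro x hx
    have h2 : X x - ((⟪x, v⟫_ℝ + lam) • x - ((1 / 2) * ‖x‖ ^ 2) • v) - C₀ x = w := by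
      rw [hwdef]
      exact myconst hUopen hUconn.isPreconnected hhd hx hx₀
    rw [← h2]; abel
  -- skew-symmetry
  have hskew : ∀ a b : E, ⟪C₀ a, b⟫_ℝ = - ⟪a, C₀ b⟫_ℝ := by
    intro a b
    have h := hck x₀ hx₀ a b
    have hf₁x₀ : f₁ x₀ = (phi v x₀ + lam • ContinuousLinearMap.id ℝ E) + C₀ := by
      have h5 := sub_eq_iff_eq_add.1 (hC x₀ hx₀)
      rw [h5, add_comm]
    rw [hf₁x₀] at h
    rw [hρeq x₀ hx₀] at h
    rw [ContinuousLinearMap.add_apply ((phi v x₀ + lam • ContinuousLinearMap.id ℝ E)) C₀ a,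
      ContinuousLinearMap.add_apply ((phi v x₀ + lam • ContinuousLinearMap.id ℝ E)) C₀ b,
      inner_add_left, inner_add_left] at h
    have hsym := Dq_symm v lam x₀ a b
    have hz : ⟪C₀ a, b⟫_ℝ + ⟪C₀ b, a⟫_ℝ = 0 := by linarith
    rw [← real_inner_comm (C₀ b) a] at hz
    linarith
  refine ⟨lam, v, w, (C₀ : E →ₗ[ℝ] E), ?_, fun x hx => ⟨?_, hρeq x hx⟩⟩
  · intro a b
    simpa using hskew a b
  · have := hfinal x hx
    simpa using this

/-- Liouville-type theorem: every conformal Killing vector field `X` with conformal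
factor `ρ` on a connected open subset of `ℝⁿ`, `n ≥ 3`, has the form
`X(x) = (⟨x,v⟩ + λ) x - (1/2)‖x‖² v + C x + w` with `C` skew-symmetric, and
`ρ(x) = ⟨x,v⟩ + λ`. -/
theorem stmt_9 {n : ℕ} (hn : 3 ≤ n)
    (U : Set (EuclideanSpace ℝ (Fin n))) (hUopen : IsOpen U) (hUconn : IsConnected U)
    (X : EuclideanSpace ℝ (Fin n) → EuclideanSpace ℝ (Fin n))
    (ρ : EuclideanSpace ℝ (Fin n) → ℝ)
    (hX : ContDiffOn ℝ (⊤ : ℕ∞) X U) (hρ : ContDiffOn ℝ (⊤ : ℕ∞) ρ U)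
    (hck : ∀ x ∈ U, ∀ Y Z : EuclideanSpace ℝ (Fin n),
      ⟪fderiv ℝ X x Y, Z⟫_ℝ + ⟪fderiv ℝ X x Z, Y⟫_ℝ = 2 * ρ x * ⟪Y, Z⟫_ℝ) :
    ∃ (lam : ℝ) (v w : EuclideanSpace ℝ (Fin n))
      (C : EuclideanSpace ℝ (Fin n) →ₗ[ℝ] EuclideanSpace ℝ (Fin n)),
      (∀ a b : EuclideanSpace ℝ (Fin n), ⟪C a, b⟫_ℝ = - ⟪a, C b⟫_ℝ) ∧
      ∀ x ∈ U,
        X x = (⟪x, v⟫_ℝ + lam) • x - ((1 / 2) * ‖x‖ ^ 2) • v + C x + w ∧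
        ρ x = ⟪x, v⟫_ℝ + lam := by
  have hfr : 3 ≤ Module.finrank ℝ (EuclideanSpace ℝ (Fin n)) := by
    rw [finrank_euclideanSpace_fin]
    exact hn
  exact main_aux hfr U hUopen hUconn X ρ hX hρ hck
end

section
/- Let w be a vector in the light cone 𝕍^{m+1} of Lorentz space 𝕃^{m+2}, v ∈ 𝕍^{m+1} with ⟨v,w⟩ = 1, and C : ℝᵐ → (span{v,w})^⊥ a linear isometry. Then the map Ψ : ℝᵐ → 𝕃^{m+2} given by Ψ(x) = v + Cx - (1/2)‖x‖²w is an isometric embedding into the light cone, its image is {u ∈ 𝕍^{m+1} : ⟨u,w⟩ = 1}, and its second fundamental form is α^Ψ(U,V) = -⟨U,V⟩w. -/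
/-!
Since `v`, `w` are null with `⟨v, w⟩ = 1` and `C` is an isometry onto `span{v, w}^⊥`, expanding
`⟨Ψ x, Ψ x⟩` gives `2 · (-½‖x‖²) + ‖x‖² = 0`, and `⟨Ψ x, w⟩ = 1`. Conversely, a null `u` with
`⟨u, w⟩ = 1` decomposes as `u = v + p + β w` with `β = ⟨u, v⟩` and `p ⊥ v, w`; by a dimension count
`p = C x`, and `⟨u, u⟩ = 0` forces `β = -½‖x‖²`, i.e. `u = Ψ x`. The derivative of `Ψ` is
`dΨₓ(U) = C U - ⟨x, U⟩ w`, which is isometric because `w` is null and orthogonal to the image of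
`C`, and differentiating once more gives the constant `-⟨U, V⟩ w`.
-/

open scoped InnerProductSpace

noncomputable section

/-- The Lorentzian inner product of signature `(m+1, 1)` on `ℝ^{m+2}`, obtained from
the Euclidean one by flipping the sign of the contribution of the last coordinate. -/
def lorentz {k : ℕ} (u v : EuclideanSpace ℝ (Fin (k + 1))) : ℝ :=
  ⟪u, v⟫_ℝ - 2 * u (Fin.last k) * v (Fin.last k)

section Lorentz

variable {k : ℕ}

lemma lorentz_comm (u v : EuclideanSpace ℝ (Fin (k + 1))) : lorentz u v = lorentz v u := by
  simp only [lorentz, real_inner_comm]; ring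

lemma lorentz_add_left (u u' v : EuclideanSpace ℝ (Fin (k + 1))) :
    lorentz (u + u') v = lorentz u v + lorentz u' v := by
  simp only [lorentz, inner_add_left, PiLp.add_apply]; ring

lemma lorentz_sub_left (u u' v : EuclideanSpace ℝ (Fin (k + 1))) :
    lorentz (u - u') v = lorentz u v - lorentz u' v := by
  simp only [lorentz, inner_sub_left, PiLp.sub_apply]; ring

lemma lorentz_smul_left (c : ℝ) (u v : EuclideanSpace ℝ (Fin (k + 1))) :
    lorentz (c • u) v = c * lorentz u v := by
  simp only [lorentz, real_inner_smul_left, PiLp.smul_apply, smul_eq_mul]; ring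

lemma lorentz_add_right (u v v' : EuclideanSpace ℝ (Fin (k + 1))) :
    lorentz u (v + v') = lorentz u v + lorentz u v' := by
  rw [lorentz_comm, lorentz_add_left, lorentz_comm v, lorentz_comm v']

lemma lorentz_sub_right (u v v' : EuclideanSpace ℝ (Fin (k + 1))) :
    lorentz u (v - v') = lorentz u v - lorentz u v' := by
  rw [lorentz_comm, lorentz_sub_left, lorentz_comm v, lorentz_comm v']

lemma lorentz_smul_right (c : ℝ) (u v : EuclideanSpace ℝ (Fin (k + 1))) :
    lorentz u (c • v) = c * lorentz u v := by
  rw [lorentz_comm, lorentz_smul_left, lorentz_comm]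

lemma lorentz_zero_left (v : EuclideanSpace ℝ (Fin (k + 1))) : lorentz 0 v = 0 := by
  simp [lorentz]

def lorentzRight (v : EuclideanSpace ℝ (Fin (k + 1))) : EuclideanSpace ℝ (Fin (k + 1)) →ₗ[ℝ] ℝ where
  toFun u := lorentz u v
  map_add' u u' := lorentz_add_left u u' v
  map_smul' c u := lorentz_smul_left c u v

@[simp]
lemma lorentzRight_apply (u v : EuclideanSpace ℝ (Fin (k + 1))) : lorentzRight v u = lorentz u v :=
  rfl

end Lorentz

section Derivative

variable {E F : Type*} [NormedAddCommGroup E] [InnerProductSpace ℝ E]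
  [NormedAddCommGroup F] [NormedSpace ℝ F]

lemma hasFDerivAt_half_norm_sq (x : E) :
    HasFDerivAt (fun y : E => (1 / 2 : ℝ) * ‖y‖ ^ 2) (innerSL ℝ x) x := by
  refine ((hasStrictFDerivAt_norm_sq x).hasFDerivAt.const_mul (1 / 2 : ℝ)).congr_fderiv ?_
  ext u
  simp

def lightConeParam (v w : F) (C : E →ₗ[ℝ] F) (x : E) : F :=
  v + C x - ((1 / 2) * ‖x‖ ^ 2) • w

variable [FiniteDimensional ℝ E] (v w : F) (C : E →ₗ[ℝ] F)

lemma hasFDerivAt_lightConeParam (x : E) :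
    HasFDerivAt (lightConeParam v w C)
      (LinearMap.toContinuousLinearMap C - (innerSL ℝ x).smulRight w) x :=
  ((LinearMap.toContinuousLinearMap C).hasFDerivAt.const_add v).sub
    ((hasFDerivAt_half_norm_sq x).smul_const w)

lemma fderiv_lightConeParam_apply (x u : E) :
    fderiv ℝ (lightConeParam v w C) x u = C u - ⟪x, u⟫_ℝ • w := by
  simp [(hasFDerivAt_lightConeParam v w C x).fderiv]

lemma fderiv_fderiv_lightConeParam_apply (x u₁ u₂ : E) :
    fderiv ℝ (fun y => fderiv ℝ (lightConeParam v w C) y u₂) x u₁ = -⟪u₁, u₂⟫_ℝ • w := by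
  have hfun : (fun y => fderiv ℝ (lightConeParam v w C) y u₂) =
      fun y => C u₂ - innerSL ℝ u₂ y • w := by
    funext y
    rw [fderiv_lightConeParam_apply, innerSL_apply_apply, real_inner_comm]
  have hderiv : HasFDerivAt (fun y => C u₂ - innerSL ℝ u₂ y • w)
      (-(innerSL ℝ u₂).smulRight w) x :=
    ((innerSL ℝ u₂).hasFDerivAt.smul_const w).const_sub (C u₂)
  rw [hfun, hderiv.fderiv, neg_apply, ContinuousLinearMap.smulRight_apply,
    innerSL_apply_apply, real_inner_comm, neg_smul]

end Derivative

section LightCone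

variable {m : ℕ} {v w : EuclideanSpace ℝ (Fin (m + 2))}
  {C : EuclideanSpace ℝ (Fin m) →ₗ[ℝ] EuclideanSpace ℝ (Fin (m + 2))}

lemma injective_of_lorentz_isometry
    (hCiso : ∀ x y, lorentz (C x) (C y) = ⟪x, y⟫_ℝ) : Function.Injective C := by
  intro x y hxy
  rw [← sub_eq_zero, ← inner_self_eq_zero (𝕜 := ℝ), ← hCiso, map_sub, hxy, sub_self,
    lorentz_zero_left]

lemma exists_apply_eq_of_lorentz_eq_zero
    (hw0 : lorentz w w = 0) (hv0 : lorentz v v = 0) (hvw : lorentz v w = 1)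
    (hCiso : ∀ x y, lorentz (C x) (C y) = ⟪x, y⟫_ℝ)
    (hCv : ∀ x, lorentz (C x) v = 0) (hCw : ∀ x, lorentz (C x) w = 0)
    {p : EuclideanSpace ℝ (Fin (m + 2))} (hpv : lorentz p v = 0) (hpw : lorentz p w = 0) :
    ∃ x, C x = p := by
  set φ := (lorentzRight v).prod (lorentzRight w)
  have hφ : Function.Surjective φ := by
    rintro ⟨a, b⟩
    refine ⟨a • w + b • v, ?_⟩
    simp [φ, lorentz_add_left, lorentz_smul_left, hv0, hw0, hvw, lorentz_comm w v]
  have hker : Module.finrank ℝ (LinearMap.ker φ) = m := by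
    have h := LinearMap.finrank_range_add_finrank_ker φ
    rw [LinearMap.range_eq_top.mpr hφ] at h
    simp only [finrank_top, Module.finrank_prod, Module.finrank_self,
      finrank_euclideanSpace_fin] at h
    omega
  have hrange : LinearMap.range C = LinearMap.ker φ := by
    apply Submodule.eq_of_le_of_finrank_le
    · rintro _ ⟨x, rfl⟩
      simp [φ, hCv, hCw]
    · rw [hker, LinearMap.finrank_range_of_inj (injective_of_lorentz_isometry hCiso),
        finrank_euclideanSpace_fin]
  rw [← LinearMap.mem_range, hrange]
  simp [φ, hpv, hpw]

lemma lorentz_lightConeParam_right (hw0 : lorentz w w = 0) (hvw : lorentz v w = 1)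
    (hCw : ∀ x, lorentz (C x) w = 0) (x) : lorentz (lightConeParam v w C x) w = 1 := by
  simp only [lightConeParam, lorentz_add_left, lorentz_sub_left, lorentz_smul_left, hvw, hw0, hCw]
  ring

lemma lorentz_right_fderiv_lightConeParam (hw0 : lorentz w w = 0)
    (hCw : ∀ x, lorentz (C x) w = 0) (x u) :
    lorentz w (fderiv ℝ (lightConeParam v w C) x u) = 0 := by
  simp only [fderiv_lightConeParam_apply, lorentz_sub_right, lorentz_smul_right, hw0,
    lorentz_comm w (C _), hCw]
  ring

lemma lorentz_fderiv_lightConeParam (hw0 : lorentz w w = 0)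
    (hCiso : ∀ x y, lorentz (C x) (C y) = ⟪x, y⟫_ℝ) (hCw : ∀ x, lorentz (C x) w = 0) (x u₁ u₂) :
    lorentz (fderiv ℝ (lightConeParam v w C) x u₁) (fderiv ℝ (lightConeParam v w C) x u₂) =
      ⟪u₁, u₂⟫_ℝ := by
  simp only [fderiv_lightConeParam_apply, lorentz_sub_left, lorentz_sub_right, lorentz_smul_left,
    lorentz_smul_right, hCiso, hCw, lorentz_comm w (C _), hw0]
  ring

lemma lorentz_apply_lightConeParam (hCiso : ∀ x y, lorentz (C x) (C y) = ⟪x, y⟫_ℝ)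
    (hCv : ∀ x, lorentz (C x) v = 0) (hCw : ∀ x, lorentz (C x) w = 0) (z x) : lorentz (C z) (lightConeParam v w C x) = ⟪z, x⟫_ℝ := by
  simp only [lightConeParam, lorentz_add_right, lorentz_sub_right, lorentz_smul_right, hCv, hCw,
    hCiso]
  ring

lemma lightConeParam_injective (hCiso : ∀ x y, lorentz (C x) (C y) = ⟪x, y⟫_ℝ)
    (hCv : ∀ x, lorentz (C x) v = 0) (hCw : ∀ x, lorentz (C x) w = 0) : Function.Injective (lightConeParam v w C) := fun x y hxy =>
  ext_inner_left ℝ fun z => by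
    rw [← lorentz_apply_lightConeParam hCiso hCv hCw, hxy,
      lorentz_apply_lightConeParam hCiso hCv hCw]

lemma range_lightConeParam (hw0 : lorentz w w = 0) (hv0 : lorentz v v = 0)
    (hvw : lorentz v w = 1) (hCiso : ∀ x y, lorentz (C x) (C y) = ⟪x, y⟫_ℝ)
    (hCv : ∀ x, lorentz (C x) v = 0) (hCw : ∀ x, lorentz (C x) w = 0) :
    Set.range (lightConeParam v w C) =
      {u | lorentz u u = 0 ∧ u ≠ 0 ∧ lorentz u w = 1} := by
  have hwv : lorentz w v = 1 := (lorentz_comm w v).trans hvw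
  ext u
  constructor
  · rintro ⟨x, rfl⟩
    refine ⟨?_, fun h => ?_, lorentz_lightConeParam_right hw0 hvw hCw x⟩
    · simp only [lightConeParam, lorentz_add_left, lorentz_add_right, lorentz_sub_left,
        lorentz_sub_right, lorentz_smul_left, lorentz_smul_right, hv0, hw0, hvw, hwv, hCiso, hCv,
        hCw, lorentz_comm v (C _), lorentz_comm w (C _), real_inner_self_eq_norm_sq]
      ring
    · simpa [h, lorentz_zero_left] using lorentz_lightConeParam_right hw0 hvw hCw x
  · rintro ⟨hu0, -, huw⟩
    set β := lorentz u v
    obtain ⟨x, hx⟩ := exists_apply_eq_of_lorentz_eq_zero hw0 hv0 hvw hCiso hCv hCw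
      (p := u - v - β • w)
      (by simp only [β, lorentz_sub_left, lorentz_smul_left, hv0, hwv]; ring)
      (by simp only [lorentz_sub_left, lorentz_smul_left, hvw, hw0, huw]; ring)
    have hnorm : ‖x‖ ^ 2 = -2 * β := by
      rw [← real_inner_self_eq_norm_sq, ← hCiso, hx]
      simp only [lorentz_sub_left, lorentz_sub_right, lorentz_smul_left, lorentz_smul_right, hu0,
        hv0, hw0, hvw, hwv, huw, lorentz_comm w u, lorentz_comm v u]
      ring
    refine ⟨x, ?_⟩
    rw [lightConeParam, hx, hnorm]
    module

end LightCone

theorem stmt_11_general {m : ℕ}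
    (w v : EuclideanSpace ℝ (Fin (m + 2)))
    (hw0 : lorentz w w = 0)
    (hv0 : lorentz v v = 0)
    (hvw : lorentz v w = 1)
    (C : EuclideanSpace ℝ (Fin m) →ₗ[ℝ] EuclideanSpace ℝ (Fin (m + 2)))
    (hCiso : ∀ x y : EuclideanSpace ℝ (Fin m), lorentz (C x) (C y) = ⟪x, y⟫_ℝ)
    (hCv : ∀ x : EuclideanSpace ℝ (Fin m), lorentz (C x) v = 0)
    (hCw : ∀ x : EuclideanSpace ℝ (Fin m), lorentz (C x) w = 0) :
    -- the map `Ψ`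
    ∀ Ψ : EuclideanSpace ℝ (Fin m) → EuclideanSpace ℝ (Fin (m + 2)),
      (∀ x, Ψ x = v + C x - ((1 / 2) * ‖x‖ ^ 2) • w) →
      -- `Ψ` is an injective isometric immersion into the light cone
      Function.Injective Ψ ∧
      (∀ (x : EuclideanSpace ℝ (Fin m)) (u₁ u₂ : EuclideanSpace ℝ (Fin m)),
        lorentz (fderiv ℝ Ψ x u₁) (fderiv ℝ Ψ x u₂) = ⟪u₁, u₂⟫_ℝ) ∧
      -- its image is the section `⟨u,w⟩ = 1` of the light cone
      Set.range Ψ = {u : EuclideanSpace ℝ (Fin (m + 2)) |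
        lorentz u u = 0 ∧ u ≠ 0 ∧ lorentz u w = 1} ∧
      -- `w` is normal along `Ψ`, and the second fundamental form is `-⟨u₁,u₂⟩ w`
      (∀ (x : EuclideanSpace ℝ (Fin m)) (u₁ u₂ u₃ : EuclideanSpace ℝ (Fin m)),
        lorentz w (fderiv ℝ Ψ x u₃) = 0 ∧
        fderiv ℝ (fun y => fderiv ℝ Ψ y u₂) x u₁ = -⟪u₁, u₂⟫_ℝ • w) := by
  intro Ψ hΨ
  obtain rfl : Ψ = lightConeParam v w C := funext hΨ
  exact ⟨lightConeParam_injective hCiso hCv hCw,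
    lorentz_fderiv_lightConeParam hw0 hCiso hCw,
    range_lightConeParam hw0 hv0 hvw hCiso hCv hCw,
    fun x u₁ u₂ u₃ => ⟨lorentz_right_fderiv_lightConeParam hw0 hCw x u₃,
      fderiv_fderiv_lightConeParam_apply v w C x u₁ u₂⟩⟩

/-- The map `Ψ(x) = v + Cx - (1/2)‖x‖² w` into the light cone of Lorentz space
`𝕃^{m+2}` is an isometric embedding with image `{u ∈ 𝕍^{m+1} : ⟨u,w⟩ = 1}`, its second
fundamental form is `α^Ψ(U,V) = -⟨U,V⟩ w`, and `w` is normal along `Ψ`. -/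
theorem stmt_11 {m : ℕ}
    (w v : EuclideanSpace ℝ (Fin (m + 2)))
    (hw0 : lorentz w w = 0) (hwne : w ≠ 0)
    (hv0 : lorentz v v = 0) (hvne : v ≠ 0)
    (hvw : lorentz v w = 1)
    (C : EuclideanSpace ℝ (Fin m) →ₗ[ℝ] EuclideanSpace ℝ (Fin (m + 2)))
    (hCiso : ∀ x y : EuclideanSpace ℝ (Fin m), lorentz (C x) (C y) = ⟪x, y⟫_ℝ)
    (hCv : ∀ x : EuclideanSpace ℝ (Fin m), lorentz (C x) v = 0)
    (hCw : ∀ x : EuclideanSpace ℝ (Fin m), lorentz (C x) w = 0) :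
    -- the map `Ψ`
    ∀ Ψ : EuclideanSpace ℝ (Fin m) → EuclideanSpace ℝ (Fin (m + 2)),
      (∀ x, Ψ x = v + C x - ((1 / 2) * ‖x‖ ^ 2) • w) →
      -- `Ψ` is an injective isometric immersion into the light cone
      Function.Injective Ψ ∧
      (∀ (x : EuclideanSpace ℝ (Fin m)) (u₁ u₂ : EuclideanSpace ℝ (Fin m)),
        lorentz (fderiv ℝ Ψ x u₁) (fderiv ℝ Ψ x u₂) = ⟪u₁, u₂⟫_ℝ) ∧
      -- its image is the section `⟨u,w⟩ = 1` of the light cone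
      Set.range Ψ = {u : EuclideanSpace ℝ (Fin (m + 2)) |
        lorentz u u = 0 ∧ u ≠ 0 ∧ lorentz u w = 1} ∧
      -- `w` is normal along `Ψ`, and the second fundamental form is `-⟨u₁,u₂⟩ w`
      (∀ (x : EuclideanSpace ℝ (Fin m)) (u₁ u₂ u₃ : EuclideanSpace ℝ (Fin m)),
        lorentz w (fderiv ℝ Ψ x u₃) = 0 ∧
        fderiv ℝ (fun y => fderiv ℝ Ψ y u₂) x u₁ = -⟪u₁, u₂⟫_ℝ • w) :=
  stmt_11_general w v hw0 hv0 hvw C hCiso hCv hCw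

end
end
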